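/- arXiv:1309.6694 — 3 statements merged into one kernel-verified Lean document; each statement's English description precedes it below -/
import Mathlib

section
/- For Noetherian R-modules M and N over a ring R, the length of the direct sum is the natural sum of the lengths: len_R(M × N) = len_R(M) ♯ len_R(N). -/
/-!
Both inequalities come from inductions along the well-founded order on submodules. A product
`A.prod B` grows strictly when either factor does, which gives `len M ♯ len N ≤ len (M × N)`.
Conversely, by the modular law a submodule `C ≤ C'` of `M × N` with the same trace on `M` and the
same image in `N` equals `C'`, so every strict enlargement of `C` strictly enlarges one of the two;
this bounds the rank of `C` by the natural sum of their ranks.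
-/

namespace Ordinal

/-- Natural (Hessenberg) addition of ordinals, as in the older Mathlib
(`Mathlib.SetTheory.Ordinal.NaturalOps`, since removed). -/
noncomputable def nadd (a b : Ordinal.{u}) : Ordinal.{u} :=
  max (⨆ x : Set.Iio a, Order.succ (nadd x.1 b)) (⨆ x : Set.Iio b, Order.succ (nadd a x.1))
termination_by (a, b)
decreasing_by all_goals cases x; decreasing_tactic

end Ordinal

infixl:65 " ♯ " => Ordinal.nadd

open Ordinal

universe u v

/-- The ordinal length of a Noetherian module: the foundation rank of the zero submodule
in the lattice of submodules ordered by reverse inclusion. -/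
noncomputable def moduleLength (R : Type u) (M : Type v) [Ring R] [AddCommGroup M]
    [Module R M] [IsNoetherian R M] : Ordinal.{v} :=
  IsWellFounded.rank (α := Submodule R M) (· > ·) ⊥

namespace Ordinal

variable {a b c d : Ordinal.{u}}

theorem nadd_lt_nadd_right (h : a < b) (c : Ordinal.{u}) : a ♯ c < b ♯ c := by
  rw [nadd.eq_1 b c]
  exact (Order.lt_succ _).trans_le <| le_max_of_le_left <|
    le_ciSup (f := fun x : Set.Iio b => Order.succ (x.1 ♯ c)) bddAbove_of_small ⟨a, h⟩

theorem nadd_lt_nadd_left (h : b < c) (a : Ordinal.{u}) : a ♯ b < a ♯ c := by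
  rw [nadd.eq_1 a c]
  exact (Order.lt_succ _).trans_le <| le_max_of_le_right <|
    le_ciSup (f := fun x : Set.Iio c => Order.succ (a ♯ x.1)) bddAbove_of_small ⟨b, h⟩

theorem nadd_le_nadd (hab : a ≤ b) (hcd : c ≤ d) : a ♯ c ≤ b ♯ d :=
  calc a ♯ c ≤ b ♯ c := hab.eq_or_lt.elim (· ▸ le_rfl) fun h => (nadd_lt_nadd_right h c).le
    _ ≤ b ♯ d := hcd.eq_or_lt.elim (· ▸ le_rfl) fun h => (nadd_lt_nadd_left h b).le

theorem nadd_lt_nadd_of_lt_of_le (hab : a < b) (hcd : c ≤ d) : a ♯ c < b ♯ d :=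
  (nadd_lt_nadd_right hab c).trans_le (nadd_le_nadd le_rfl hcd)

theorem nadd_lt_nadd_of_le_of_lt (hab : a ≤ b) (hcd : c < d) : a ♯ c < b ♯ d :=
  (nadd_lt_nadd_left hcd a).trans_le (nadd_le_nadd hab le_rfl)

theorem nadd_le_iff : a ♯ b ≤ c ↔ (∀ a' < a, a' ♯ b < c) ∧ ∀ b' < b, a ♯ b' < c := by
  refine ⟨fun h => ⟨fun a' ha => (nadd_lt_nadd_right ha b).trans_le h,
    fun b' hb => (nadd_lt_nadd_left hb a).trans_le h⟩, fun ⟨ha, hb⟩ => ?_⟩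
  rw [nadd.eq_1 a b]
  exact max_le (Ordinal.iSup_le fun x => Order.succ_le_of_lt (ha x.1 x.2))
    (Ordinal.iSup_le fun x => Order.succ_le_of_lt (hb x.1 x.2))

end Ordinal

theorem IsWellFounded.lt_rank_iff {α : Type u} {r : α → α → Prop} [IsWellFounded α r] {a : α}
    {o : Ordinal.{u}} : o < rank r a ↔ ∃ b, r b a ∧ o ≤ rank r b := by
  refine ⟨fun h => ?_, fun ⟨b, hba, hob⟩ => hob.trans_lt (rank_lt_of_rel hba)⟩
  rw [rank_eq, Ordinal.lt_iSup_iff] at h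
  obtain ⟨⟨b, hba⟩, h⟩ := h
  exact ⟨b, hba, Order.lt_succ_iff.mp h⟩

section RankInequalities

open IsWellFounded

theorem rank_nadd_rank_le_rank {α β γ : Type u} [Preorder α] [Preorder β] [Preorder γ]
    [WellFoundedGT α] [WellFoundedGT β] [WellFoundedGT γ] {φ : α → β → γ}
    (h₁ : ∀ b, StrictMono (φ · b)) (h₂ : ∀ a, StrictMono (φ a)) (a : α) (b : β) :
    rank (· > ·) a ♯ rank (· > ·) b ≤ rank (· > ·) (φ a b) := by
  induction a using WellFoundedGT.induction generalizing b with | _ a iha =>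
  induction b using WellFoundedGT.induction with | _ b ihb =>
  refine nadd_le_iff.2 ⟨fun o ho => ?_, fun o ho => ?_⟩
  · obtain ⟨a', ha', hle⟩ := lt_rank_iff.1 ho
    calc o ♯ rank (· > ·) b ≤ rank (· > ·) a' ♯ rank (· > ·) b := nadd_le_nadd hle le_rfl
      _ ≤ rank (· > ·) (φ a' b) := iha a' ha' b
      _ < rank (· > ·) (φ a b) := WellFoundedGT.rank_strictAnti (h₁ b ha')
  · obtain ⟨b', hb', hle⟩ := lt_rank_iff.1 ho
    calc rank (· > ·) a ♯ o ≤ rank (· > ·) a ♯ rank (· > ·) b' := nadd_le_nadd le_rfl hle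
      _ ≤ rank (· > ·) (φ a b') := ihb b' hb'
      _ < rank (· > ·) (φ a b) := WellFoundedGT.rank_strictAnti (h₂ a hb')

theorem rank_le_rank_nadd_rank {α β γ : Type u} [PartialOrder α] [PartialOrder β] [Preorder γ]
    [WellFoundedGT α] [WellFoundedGT β] [WellFoundedGT γ] {φ : γ → α} {ψ : γ → β}
    (hφ : Monotone φ) (hψ : Monotone ψ)
    (h : ∀ ⦃c c'⦄, c < c' → φ c < φ c' ∨ ψ c < ψ c') (c : γ) :
    rank (· > ·) c ≤ rank (· > ·) (φ c) ♯ rank (· > ·) (ψ c) := by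
  induction c using WellFoundedGT.induction with | _ c ih =>
  rw [rank_eq]
  refine Ordinal.iSup_le fun ⟨c', hc'⟩ => Order.succ_le_of_lt <| (ih c' hc').trans_lt ?_
  have rank_φ_le := WellFoundedGT.rank_strictAnti.antitone (hφ hc'.le)
  have rank_ψ_le := WellFoundedGT.rank_strictAnti.antitone (hψ hc'.le)
  rcases h hc' with hlt | hlt
  · exact nadd_lt_nadd_of_lt_of_le (WellFoundedGT.rank_strictAnti hlt) rank_ψ_le
  · exact nadd_lt_nadd_of_le_of_lt rank_φ_le (WellFoundedGT.rank_strictAnti hlt)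

end RankInequalities

namespace Submodule

variable {R : Type u} {M N P : Type v} [Ring R] [AddCommGroup M] [Module R M]
  [AddCommGroup N] [Module R N] [AddCommGroup P] [Module R P]

theorem prod_left_strictMono (q : Submodule R N) :
    StrictMono fun p : Submodule R M => p.prod q :=
  Monotone.strictMono_of_injective (fun _ _ h => prod_mono h le_rfl) fun p p' h => by
    ext x
    simpa using congr(((x, 0) : M × N) ∈ $h)

theorem prod_right_strictMono (p : Submodule R M) :
    StrictMono fun q : Submodule R N => p.prod q :=
  Monotone.strictMono_of_injective (fun _ _ h => prod_mono le_rfl h) fun q q' h => by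
    ext y
    simpa using congr(((0, y) : M × N) ∈ $h)

theorem comap_lt_comap_or_map_lt_map {i : M →ₗ[R] P} {f : P →ₗ[R] N}
    (hif : LinearMap.ker f ≤ LinearMap.range i) {C C' : Submodule R P} (hC : C < C') :
    C.comap i < C'.comap i ∨ C.map f < C'.map f := by
  refine or_iff_not_imp_left.2 fun hcomap => (map_mono hC.le).lt_of_ne fun hmap => hC.ne ?_
  replace hcomap := (comap_mono hC.le).eq_of_not_lt hcomap
  refine eq_of_le_of_inf_le_of_sup_le (z := LinearMap.ker f) hC.le (le_inf ?_ inf_le_right) ?_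
  · calc C' ⊓ LinearMap.ker f ≤ LinearMap.range i ⊓ C' :=
          le_inf (inf_le_right.trans hif) inf_le_left
      _ = (C'.comap i).map i := (map_comap_eq i C').symm
      _ ≤ C := hcomap ▸ map_comap_le i C
  · rw [← comap_map_eq, ← comap_map_eq, hmap]

end Submodule

section ModuleLength

variable {R : Type u} {M N P : Type v} [Ring R] [AddCommGroup M] [Module R M]
  [AddCommGroup N] [Module R N] [AddCommGroup P] [Module R P]
  [IsNoetherian R M] [IsNoetherian R N]

theorem moduleLength_le_nadd_of_ker_le_range [IsNoetherian R P] {i : M →ₗ[R] P}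
    {f : P →ₗ[R] N} (hi : Function.Injective i) (hif : LinearMap.ker f ≤ LinearMap.range i) :
    moduleLength R P ≤ moduleLength R M ♯ moduleLength R N := by
  simpa [moduleLength, Submodule.comap_bot, LinearMap.ker_eq_bot.2 hi] using
    rank_le_rank_nadd_rank (fun _ _ => Submodule.comap_mono) (fun _ _ => Submodule.map_mono)
      (fun _ _ => Submodule.comap_lt_comap_or_map_lt_map hif) (⊥ : Submodule R P)

theorem nadd_moduleLength_le_moduleLength_prod :
    moduleLength R M ♯ moduleLength R N ≤ moduleLength R (M × N) := by
  simpa [moduleLength, Submodule.prod_bot] using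
    rank_nadd_rank_le_rank Submodule.prod_left_strictMono Submodule.prod_right_strictMono
      (⊥ : Submodule R M) (⊥ : Submodule R N)

end ModuleLength

/-- The length of a direct sum is the natural (Hessenberg) sum of the lengths. -/
theorem moduleLength_prod (R : Type u) (M N : Type v) [Ring R] [AddCommGroup M] [Module R M]
    [AddCommGroup N] [Module R N] [IsNoetherian R M] [IsNoetherian R N] :
    moduleLength R (M × N) = moduleLength R M ♯ moduleLength R N :=
  (moduleLength_le_nadd_of_ker_le_range LinearMap.inl_injective
    (LinearMap.ker_snd R M N).le).antisymm nadd_moduleLength_le_moduleLength_prod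
end

section
/- Parameter Criterion: Let R be a Noetherian ring of finite Krull dimension d and let f ∈ R be a non-unit. Then f is a parameter, i.e. the Krull dimension of R/fR is strictly less than d, if and only if the annihilator ideal ann_R(f) = { x ∈ R : f·x = 0 }, viewed as an R-module, has dimension at most d−1 (i.e. dim ann_R(f) < d). -/
/-!
Since `f` kills `ann(f)`, `Supp ann(f) ⊆ V(f)`, which bounds `dim ann(f)` by `dim R/fR`.
Conversely, as `dim R = d`, a chain of primes of length `d` in `V(f)` starts at a minimal prime `p`.
Minimal primes of a Noetherian ring are associated, `p = ann(x)`, and `f ∈ p` says `x ∈ ann(f)`,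
so `p ∈ Supp ann(f)`; as supports are closed under specialization, the whole chain lies in
`Supp ann(f)`.
-/

open Order PrimeSpectrum

namespace LTSeries

variable {α : Type*} [Preorder α]

theorem length_le_krullDim_of_forall_mem {s : Set α} (l : LTSeries α) (hl : ∀ i, l i ∈ s) :
    l.length ≤ krullDim s :=
  LTSeries.length_le_krullDim ⟨l.length, fun i ↦ ⟨l i, hl i⟩, l.step⟩

theorem isMin_head_of_length_eq_krullDim {d : ℕ} (hα : krullDim α = d) (l : LTSeries α)
    (hl : l.length = d) : IsMin l.head := by
  by_contra hmin
  obtain ⟨a, ha⟩ := not_isMin_iff.mp hmin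
  have := LTSeries.length_le_krullDim (l.cons a ha)
  rw [RelSeries.cons_length, hl, hα] at this
  exact absurd (WithBot.coe_le_coe.mp this) (by norm_cast; omega)

end LTSeries

namespace Order

variable {α : Type*} [Preorder α]

theorem krullDim_le_of_subset {s t : Set α} (h : s ⊆ t) : krullDim s ≤ krullDim t :=
  krullDim_le_of_strictMono (Set.inclusion h) fun _ _ hab ↦ hab

theorem le_krullDim_of_isUpperSet {d : ℕ} (hα : krullDim α = d) {s t : Set α}
    (hs : IsUpperSet s) (hts : ∀ a ∈ t, IsMin a → a ∈ s) (ht : d ≤ krullDim t) :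
    d ≤ krullDim s := by
  obtain ⟨l, hl⟩ := le_krullDim_iff.mp ht
  let l' : LTSeries α := l.map Subtype.val fun _ _ h ↦ h
  have hhead : l'.head ∈ s := hts _ l.head.2 (l'.isMin_head_of_length_eq_krullDim hα hl)
  rw [← hl]
  exact l'.length_le_krullDim_of_forall_mem fun i ↦ hs (l'.monotone (Fin.zero_le i)) hhead

end Order

namespace Ideal

variable {R : Type*} [CommRing R]

theorem mem_annihilator_span_singleton_iff {f x : R} :
    x ∈ (span {f}).annihilator ↔ f * x = 0 := by
  rw [span, Submodule.mem_annihilator_span_singleton, smul_eq_mul, mul_comm]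

theorem support_annihilator_span_singleton_subset (f : R) :
    Module.support R (span {f}).annihilator ⊆ zeroLocus (span {f}) := by
  intro p hp
  rw [mem_zeroLocus, SetLike.coe_subset_coe, span_le, Set.singleton_subset_iff]
  refine Module.annihilator_le_of_mem_support hp (Module.mem_annihilator.mpr fun x ↦ ?_)
  exact Subtype.ext (mem_annihilator_span_singleton_iff.mp x.2)

theorem mem_support_annihilator_span_singleton [IsNoetherianRing R] {f : R}
    {p : PrimeSpectrum R} (hp : p.asIdeal ∈ minimalPrimes R) (hf : f ∈ p.asIdeal) :
    p ∈ Module.support R (span {f}).annihilator := by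
  have hass : IsAssociatedPrime p.asIdeal R := by
    apply Module.associatedPrimes.minimalPrimes_annihilator_subset_associatedPrimes R R
    rwa [Module.annihilator_eq_bot.mpr inferInstance]
  obtain ⟨x, hx⟩ := (isAssociatedPrime_iff.mp hass).2
  rw [hx, Submodule.mem_colon_singleton, Submodule.mem_bot, smul_eq_mul] at hf
  refine Module.mem_support_iff_exists_annihilator.mpr
    ⟨⟨x, mem_annihilator_span_singleton_iff.mpr hf⟩, fun r hr ↦ ?_⟩
  rw [Submodule.mem_annihilator_span_singleton] at hr
  rw [hx, Submodule.mem_colon_singleton, Submodule.mem_bot]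
  exact congrArg Subtype.val hr

end Ideal

theorem parameter_criterion_general {R : Type*} [CommRing R] [IsNoetherianRing R] (d : ℕ)
    (hd : ringKrullDim R = d) (f : R) :
    ringKrullDim (R ⧸ Ideal.span {f}) < (d : WithBot ℕ∞) ↔
      Order.krullDim (Module.support R ↥((Ideal.span {f} : Ideal R).annihilator)) <
        (d : WithBot ℕ∞) := by
  rw [ringKrullDim_quotient, ← not_le, ← not_le, not_iff_not]
  constructor
  · refine le_krullDim_of_isUpperSet hd (fun _ _ ↦ Module.mem_support_mono) fun p hp hmin ↦ ?_
    exact Ideal.mem_support_annihilator_span_singleton (isMin_iff.mp hmin)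
      (hp (Ideal.mem_span_singleton_self f))
  · exact fun h ↦
      h.trans (krullDim_le_of_subset (Ideal.support_annihilator_span_singleton_subset f))

/-- **Parameter Criterion.** Let `R` be a Noetherian ring of finite Krull dimension `d` and
`f ∈ R` a non-unit. Then `f` is a parameter (i.e. `dim R/fR < d`) if and only if the
annihilator ideal `ann_R(f)`, viewed as an `R`-module, has dimension `< d`. -/
theorem parameter_criterion {R : Type*} [CommRing R] [IsNoetherianRing R] (d : ℕ)
    (hd : ringKrullDim R = d) (f : R) (hf : ¬ IsUnit f) :
    ringKrullDim (R ⧸ Ideal.span {f}) < (d : WithBot ℕ∞) ↔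
      Order.krullDim (Module.support R ↥((Ideal.span {f} : Ideal R).annihilator)) <
        (d : WithBot ℕ∞) :=
  parameter_criterion_general d hd f
end

section
/- Ping-pong degradation: Let R be a Noetherian ring of finite Krull dimension and let M and N be finitely generated R-modules such that M is torsion-free as an abelian group (no nonzero element of M is killed by a nonzero integer) and M and N have no associated primes in common (Ass(M) ∩ Ass(N) = ∅). Then there exists k ∈ ℕ such that for every choice of R-linear maps f_1, …, f_k : M → N and g_1, …, g_k : N → M, the composition g_k ∘ f_k ∘ ⋯ ∘ g_1 ∘ f_1 is the zero endomorphism of M. -/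
/-!
If `(g₁ ∘ f₁) ∘ ⋯ ∘ (g_k ∘ f_k)` does not kill `x`, pick an associated prime `P` of `M` over
the annihilator of the image of `x`. Every prime over the annihilator of an element contains an
associated prime over it (a minimal prime of the annihilator of the cyclic submodule it spans),
and annihilators only grow under linear maps. Peeling off `g₁` and then `f₁` therefore yields
`Q ∈ Ass N` and `P' ∈ Ass M` with `P' ≤ Q ≤ P`, both inclusions strict since `Ass M` and `Ass N`
are disjoint. Iterating gives a chain of primes of length `2k`, so `2k ≤ dim R`.
-/

open Ideal Submodule

section

variable {R M N : Type*} [CommRing R] [AddCommGroup M] [Module R M] [AddCommGroup N] [Module R N]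

lemma Ideal.torsionOf_le_torsionOf_apply (f : M →ₗ[R] N) (x : M) :
    torsionOf R M x ≤ torsionOf R N (f x) := fun r hr => by
  rw [mem_torsionOf_iff] at hr ⊢
  rw [← map_smul, hr, map_zero]

lemma exists_mem_associatedPrimes_of_torsionOf_le [IsNoetherianRing R] {x : M} {p : Ideal R}
    [p.IsPrime] (hp : torsionOf R M x ≤ p) :
    ∃ P ∈ associatedPrimes R M, torsionOf R M x ≤ P ∧ P ≤ p := by
  rw [← annihilator_span_singleton_eq_torsionOf] at hp ⊢
  obtain ⟨P, hPmin, hPp⟩ := Ideal.exists_minimalPrimes_le hp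
  have hP : P ∈ associatedPrimes R (R ∙ x) :=
    Module.associatedPrimes.minimalPrimes_annihilator_subset_associatedPrimes R _ hPmin
  exact ⟨P, associatedPrimes.subset_of_injective (R ∙ x).injective_subtype hP, hPmin.1.2, hPp⟩

lemma exists_mem_associatedPrimes_lt_of_torsionOf_map_le [IsNoetherianRing R]
    (f : M →ₗ[R] N) {x : M} {p : Ideal R} [p.IsPrime] (hpM : p ∉ associatedPrimes R M)
    (hx : torsionOf R N (f x) ≤ p) :
    ∃ P ∈ associatedPrimes R M, torsionOf R M x ≤ P ∧ P < p := by
  obtain ⟨P, hP, hxP, hPp⟩ :=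
    exists_mem_associatedPrimes_of_torsionOf_le ((torsionOf_le_torsionOf_apply f x).trans hx)
  exact ⟨P, hP, hxP, hPp.lt_of_ne (by rintro rfl; exact hpM hP)⟩

def pingPong {k : ℕ} (f : Fin k → M →ₗ[R] N) (g : Fin k → N →ₗ[R] M) : Module.End R M :=
  (List.ofFn fun i => g i ∘ₗ f i).prod

lemma pingPong_succ_apply {k : ℕ} (f : Fin (k + 1) → M →ₗ[R] N) (g : Fin (k + 1) → N →ₗ[R] M)
    (x : M) : pingPong f g x = g 0 (f 0 (pingPong (fun i => f i.succ) (fun i => g i.succ) x)) := by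
  rw [pingPong, List.ofFn_succ, List.prod_cons]
  rfl

theorem two_mul_le_height_of_torsionOf_pingPong_le [IsNoetherianRing R]
    (hass : Disjoint (associatedPrimes R M) (associatedPrimes R N)) {k : ℕ}
    (f : Fin k → M →ₗ[R] N) (g : Fin k → N →ₗ[R] M) (x : M) {P : Ideal R}
    (hP : P ∈ associatedPrimes R M) (hxP : torsionOf R M (pingPong f g x) ≤ P) :
    ((2 * k : ℕ) : ℕ∞) ≤ P.height := by
  induction k generalizing P with
  | zero => simp
  | succ k ih =>
    rw [pingPong_succ_apply] at hxP
    have := hP.isPrime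
    obtain ⟨Q, hQ, hzQ, hQP⟩ := exists_mem_associatedPrimes_lt_of_torsionOf_map_le (g 0)
      (Set.disjoint_left.mp hass hP) hxP
    have := hQ.isPrime
    obtain ⟨P', hP', hzP', hP'Q⟩ := exists_mem_associatedPrimes_lt_of_torsionOf_map_le (f 0)
      (Set.disjoint_right.mp hass hQ) hzQ
    have := hP'.isPrime
    calc ((2 * (k + 1) : ℕ) : ℕ∞) = ((2 * k : ℕ) : ℕ∞) + 1 + 1 := by push_cast; ring
      _ ≤ P'.height + 1 + 1 := by gcongr; exact ih _ _ hP' hzP'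
      _ ≤ Q.height + 1 := by gcongr; exact height_add_one_le_of_lt_of_isPrime hP'Q
      _ ≤ P.height := height_add_one_le_of_lt_of_isPrime hQP

end

theorem pingpong_degradation_general (R M N : Type u) [CommRing R] [IsNoetherianRing R]
    [AddCommGroup M] [Module R M]
    [AddCommGroup N] [Module R N]
    (hfin : ringKrullDim R ≠ ⊤)
    (hass : associatedPrimes R M ∩ associatedPrimes R N = ∅) :
    ∃ k : ℕ, ∀ (f : Fin k → (M →ₗ[R] N)) (g : Fin k → (N →ₗ[R] M)),
      (List.ofFn fun i => ((g i) ∘ₗ (f i) : Module.End R M)).prod = 0 := by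
  obtain ⟨n, hn⟩ : ∃ n : ℕ, ringKrullDim R ≤ n := by
    rcases h : ringKrullDim R with _ | (_ | n)
    · exact ⟨0, bot_le⟩
    · exact absurd h hfin
    · exact ⟨n, le_rfl⟩
  refine ⟨n + 1, fun f g => ?_⟩
  by_contra hne
  obtain ⟨x, hx⟩ := DFunLike.ne_iff.mp hne
  obtain ⟨P, hP, hxP⟩ := exists_le_isAssociatedPrime_of_isNoetherianRing R _ hx
  rw [bot_colon', annihilator_span_singleton_eq_torsionOf] at hxP
  have := hP.isPrime
  have hheight := two_mul_le_height_of_torsionOf_pingPong_le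
    (Set.disjoint_iff_inter_eq_empty.mpr hass) f g x hP hxP
  have h : ((2 * (n + 1) : ℕ) : WithBot ℕ∞) ≤ n :=
    (WithBot.coe_le_coe.mpr hheight).trans (height_le_ringKrullDim_of_isPrime.trans hn)
  norm_cast at h
  omega

/-- **Ping-pong degradation.** If `M` and `N` are finitely generated modules over a Noetherian
ring of finite Krull dimension, `M` is `ℤ`-torsion-free, and `M`, `N` have no associated primes
in common, then there is `k` such that every composition
`g_k ∘ f_k ∘ ⋯ ∘ g_1 ∘ f_1` with `f_i : M → N`, `g_i : N → M` vanishes. -/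
theorem pingpong_degradation (R M N : Type u) [CommRing R] [IsNoetherianRing R]
    [AddCommGroup M] [Module R M] [Module.Finite R M]
    [AddCommGroup N] [Module R N] [Module.Finite R N]
    (hfin : ringKrullDim R ≠ ⊤)
    (htf : ∀ (n : ℤ) (x : M), n ≠ 0 → n • x = 0 → x = 0)
    (hass : associatedPrimes R M ∩ associatedPrimes R N = ∅) :
    ∃ k : ℕ, ∀ (f : Fin k → (M →ₗ[R] N)) (g : Fin k → (N →ₗ[R] M)),
      (List.ofFn fun i => ((g i) ∘ₗ (f i) : Module.End R M)).prod = 0 :=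
  pingpong_degradation_general R M N hfin hass
end
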